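/- arXiv:1902.02736 — 2 statements merged into one kernel-verified Lean document; each statement's English description precedes it below -/
import Mathlib

section
/- Fix a C-sequence ⟨C_α | α < ω₁⟩ on ω₁ satisfying (⋆). Then ρ₁ is nontrivial: there exists no function ρ̃₁ : ω₁ → ℤ such that for every β < ω₁, ρ̃₁(α) = ρ₁(α,β) for all but finitely many α < β. -/
noncomputable section
open Ordinal Set

/-- The first uncountable ordinal `ω₁`. -/
def omega1 : Ordinal.{0} := (Cardinal.aleph 1).ord

/-- `IsOtp s o`: the set of ordinals `s` has order type `o`. -/
def IsOtp (s : Set Ordinal.{0}) (o : Ordinal.{0}) : Prop :=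
  Nonempty (s ≃o Set.Iio o)

/-- A C-sequence on `ω₁`: each `C α` is a cofinal subset of `α` (in particular `C 0 = ∅`). -/
def IsCSequence (C : Ordinal.{0} → Set Ordinal.{0}) : Prop :=
  ∀ α, α < omega1 → (∀ ξ ∈ C α, ξ < α) ∧ (∀ ξ, ξ < α → ∃ η ∈ C α, ξ ≤ η)

/-- The condition `(⋆)`: `otp (C α) = cf (α)` for all `α < ω₁`. -/
def StarProperty (C : Ordinal.{0} → Set Ordinal.{0}) : Prop :=
  ∀ α, α < omega1 → IsOtp (C α) (Ordinal.cof α).ord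

/-- `Tr` is the upper trace function of the walk along the C-sequence `C`:
`Tr α α = {α}` and `Tr α β = {β} ∪ Tr α (min (C β \ α))` for `α < β < ω₁`. -/
def IsUpperTrace (C : Ordinal.{0} → Set Ordinal.{0})
    (Tr : Ordinal.{0} → Ordinal.{0} → Finset Ordinal.{0}) : Prop :=
  (∀ α, Tr α α = {α}) ∧
  ∀ α β, α < β → β < omega1 → Tr α β = insert β (Tr α (sInf (C β \ Set.Iio α)))

/-- `IsRho1 C Tr rho1`: `rho1 α β` is the maximum weight
`max {otp (C ξ ∩ α) | ξ ∈ Tr α β \ {α}}`, a natural number under `(⋆)`. -/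
def IsRho1 (C : Ordinal.{0} → Set Ordinal.{0})
    (Tr : Ordinal.{0} → Ordinal.{0} → Finset Ordinal.{0})
    (rho1 : Ordinal.{0} → Ordinal.{0} → ℕ) : Prop :=
  ∀ α β, α < β → β < omega1 →
    IsGreatest {o : Ordinal | ∃ ξ ∈ Tr α β, ξ ≠ α ∧ IsOtp (C ξ ∩ Set.Iio α) o}
      (rho1 α β)

/-- The number-of-steps function `ρ₂ (α, β) = |Tr (α, β)|`, as an integer. -/
def rho2 (Tr : Ordinal.{0} → Ordinal.{0} → Finset Ordinal.{0}) (α β : Ordinal.{0}) : ℤ :=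
  (Tr α β).card

/-! For fixed `β` and `n` only finitely many `α < β` have `ρ₁(α, β) ≤ n`. Indeed, the first step
of the walk from `β` down to `α` is `γ = min (C β \ α)`; since `C β ∩ γ = C β ∩ α` and the weight
of `β` is at most `ρ₁(α, β)`, `γ` ranges over the finitely many points of `C β` with at most `n`
predecessors in `C β`, and either `α = γ` or `ρ₁(α, γ) ≤ ρ₁(α, β)`, so induction applies at `γ < β`.
Consequently, if some `ρ̃₁` agreed with every `ρ₁(·, β)` up to finitely many `α`, each fibre
`ρ̃₁⁻¹{k}` would meet every `β < ω₁` in a finite set, hence be countable, and `ω₁` would be a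
countable union of countable sets. -/

section LinearOrder

variable {α : Type*} [LinearOrder α] (s : Set α)

theorem Set.strictMonoOn_ncard_inter_Iio :
    StrictMonoOn (fun x ↦ (s ∩ Iio x).ncard) {x ∈ s | (s ∩ Iio x).Finite} := by
  rintro x ⟨hxs, -⟩ y ⟨-, hy⟩ hxy
  refine ncard_lt_ncard ⟨inter_subset_inter_right _ (Iio_subset_Iio hxy.le), fun h ↦ ?_⟩ hy
  exact lt_irrefl x (h ⟨hxs, hxy⟩).2

theorem Set.finite_setOf_ncard_inter_Iio_le (n : ℕ) :
    {x ∈ s | (s ∩ Iio x).Finite ∧ (s ∩ Iio x).ncard ≤ n}.Finite := by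
  refine Finite.of_finite_image ((finite_Iic n).subset ?_) <|
    (strictMonoOn_ncard_inter_Iio s).injOn.mono fun _ hx ↦ mem_sep hx.1 hx.2.1
  rintro _ ⟨x, hx, rfl⟩
  exact hx.2.2

theorem Set.Countable.of_finite_inter_Iio (h : ∀ x ∈ s, (s ∩ Iio x).Finite) : s.Countable :=
  countable_iff_exists_injOn.2
    ⟨_, (strictMonoOn_ncard_inter_Iio s).injOn.mono fun x hx ↦ mem_sep hx (h x hx)⟩

end LinearOrder

section WellOrder

variable {α : Type*} [ConditionallyCompleteLinearOrderBot α] [WellFoundedLT α] {s : Set α} {a : α}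

theorem le_csInf_diff_Iio (h : (s \ Iio a).Nonempty) : a ≤ sInf (s \ Iio a) :=
  not_lt.1 (csInf_mem h).2

theorem inter_Iio_csInf_diff_Iio (h : (s \ Iio a).Nonempty) :
    s ∩ Iio (sInf (s \ Iio a)) = s ∩ Iio a := by
  refine Subset.antisymm (fun x hx ↦ mem_inter hx.1 ?_) ?_
  · by_contra hxa
    exact (csInf_le' (mem_sdiff_of_mem hx.1 hxa)).not_gt hx.2
  · exact inter_subset_inter_right _ (Iio_subset_Iio (le_csInf_diff_Iio h))

end WellOrder

theorem IsOtp.encard_eq {s : Set Ordinal.{0}} {m : ℕ} (h : IsOtp s m) : s.encard = m := by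
  obtain ⟨e⟩ := h
  rw [encard_congr e.toEquiv, ← natCast_image_Iio, Nat.cast_injective.encard_image,
    ← Finset.coe_range, encard_coe_eq_coe_finsetCard, Finset.card_range]

theorem exists_isOtp_of_subset_Iio {s : Set Ordinal.{0}} {γ : Ordinal.{0}} (h : s ⊆ Iio γ) :
    ∃ o, IsOtp s o := by
  have hle : typeLT s ≤ lift.{1} γ := by
    rw [← type_lt_Iio]
    exact (OrderEmbedding.ofStrictMono (Set.inclusion h) fun _ _ ↦ id).ltEmbedding.ordinal_type_le
  obtain ⟨o, ho⟩ := mem_range_lift_of_le hle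
  rw [← type_lt_Iio, type_eq] at ho
  exact ⟨o, ⟨(OrderIso.ofRelIsoLT ho.some).symm⟩⟩

theorem not_countable_Iio_omega1 : ¬ (Iio omega1).Countable := by
  rw [← Cardinal.le_aleph0_iff_set_countable, Cardinal.mk_Iio_ordinal, omega1, Cardinal.card_ord,
    ← Cardinal.lift_aleph0.{1, 0}, Cardinal.lift_le, not_le]
  exact Cardinal.aleph0_lt_aleph_one

section Walks

variable {C : Ordinal → Set Ordinal} {Tr : Ordinal → Ordinal → Finset Ordinal}
  {rho1 : Ordinal → Ordinal → ℕ} {α β : Ordinal}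

theorem IsCSequence.sdiff_Iio_nonempty (hC : IsCSequence C) (hαβ : α < β) (hβ : β < omega1) :
    (C β \ Iio α).Nonempty :=
  let ⟨η, hη, hαη⟩ := (hC β hβ).2 α hαβ
  ⟨η, hη, not_lt.2 hαη⟩

theorem IsUpperTrace.mem_self (hTr : IsUpperTrace C Tr) (hαβ : α < β) (hβ : β < omega1) :
    β ∈ Tr α β := by
  rw [hTr.2 α β hαβ hβ]
  exact Finset.mem_insert_self _ _

theorem IsUpperTrace.step_subset (hTr : IsUpperTrace C Tr) (hαβ : α < β) (hβ : β < omega1) :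
    Tr α (sInf (C β \ Iio α)) ⊆ Tr α β := by
  rw [hTr.2 α β hαβ hβ]
  exact Finset.subset_insert _ _

theorem IsRho1.le_of_trace_subset (hrho1 : IsRho1 C Tr rho1) {γ : Ordinal} (hαγ : α < γ)
    (hγ : γ < omega1) (hαβ : α < β) (hβ : β < omega1) (h : Tr α γ ⊆ Tr α β) :
    rho1 α γ ≤ rho1 α β := by
  have := (hrho1 α γ hαγ hγ).mono (hrho1 α β hαβ hβ)
    fun _ ⟨ξ, hξ, hξα, ho⟩ ↦ ⟨ξ, h hξ, hξα, ho⟩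
  exact_mod_cast this

theorem IsRho1.ncard_inter_Iio_le (hTr : IsUpperTrace C Tr) (hrho1 : IsRho1 C Tr rho1)
    (hαβ : α < β) (hβ : β < omega1) :
    (C β ∩ Iio α).Finite ∧ (C β ∩ Iio α).ncard ≤ rho1 α β := by
  obtain ⟨o, ho⟩ := exists_isOtp_of_subset_Iio (inter_subset_right (s := C β))
  have hle : o ≤ rho1 α β := (hrho1 α β hαβ hβ).2 ⟨β, hTr.mem_self hαβ hβ, hαβ.ne', ho⟩
  obtain ⟨m, rfl⟩ := lt_omega0.1 (hle.trans_lt (natCast_lt_omega0 _))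
  have hcard := ho.encard_eq
  refine ⟨finite_of_encard_eq_coe hcard, ?_⟩
  rw [ncard_def, hcard, ENat.toNat_natCast]
  exact_mod_cast hle

theorem IsRho1.finite_setOf_le (hC : IsCSequence C) (hTr : IsUpperTrace C Tr)
    (hrho1 : IsRho1 C Tr rho1) (hβ : β < omega1) (n : ℕ) :
    {α | α < β ∧ rho1 α β ≤ n}.Finite := by
  induction β using WellFoundedLT.induction with
  | _ β ih =>
  set M := {ξ ∈ C β | (C β ∩ Iio ξ).Finite ∧ (C β ∩ Iio ξ).ncard ≤ n}
  have hMβ : ∀ ξ ∈ M, ξ < β := fun ξ hξ ↦ (hC β hβ).1 ξ hξ.1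
  refine ((finite_setOf_ncard_inter_Iio_le (C β) n).union <|
    (finite_setOf_ncard_inter_Iio_le (C β) n).biUnion fun ξ hξ ↦
      ih ξ (hMβ ξ hξ) ((hMβ ξ hξ).trans hβ)).subset ?_
  rintro α ⟨hαβ, hn⟩
  have hne := hC.sdiff_Iio_nonempty hαβ hβ
  set γ := sInf (C β \ Iio α)
  have hγM : γ ∈ M := by
    obtain ⟨hfin, hcard⟩ := hrho1.ncard_inter_Iio_le hTr hαβ hβ
    rw [← inter_Iio_csInf_diff_Iio hne] at hfin hcard
    exact ⟨(csInf_mem hne).1, hfin, hcard.trans hn⟩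
  rcases (le_csInf_diff_Iio hne).eq_or_lt with hαγ | hαγ
  · exact Or.inl (hαγ ▸ hγM)
  · have hγ : γ < omega1 := (hMβ γ hγM).trans hβ
    refine Or.inr (mem_biUnion hγM ⟨hαγ, ?_⟩)
    exact (hrho1.le_of_trace_subset hαγ hγ hαβ hβ (hTr.step_subset hαβ hβ)).trans hn

end Walks

theorem statement1_general (C : Ordinal → Set Ordinal) (hC : IsCSequence C)
    (Tr : Ordinal → Ordinal → Finset Ordinal) (hTr : IsUpperTrace C Tr)
    (rho1 : Ordinal → Ordinal → ℕ) (hrho1 : IsRho1 C Tr rho1) :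
    ¬∃ f : Ordinal → ℤ, ∀ β, β < omega1 →
      {α : Ordinal | α < β ∧ f α ≠ (rho1 α β : ℤ)}.Finite := by
  rintro ⟨f, hf⟩
  have hlevel : ∀ k : ℤ, {α | α < omega1 ∧ f α = k}.Countable := fun k ↦
    Countable.of_finite_inter_Iio _ fun β hβ ↦ by
      refine ((hf β hβ.1).union (hrho1.finite_setOf_le hC hTr hβ.1 k.toNat)).subset ?_
      rintro α ⟨⟨-, hα⟩, hαβ⟩
      by_cases h : f α = rho1 α β
      · exact Or.inr ⟨hαβ, by omega⟩
      · exact Or.inl ⟨hαβ, h⟩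
  exact not_countable_Iio_omega1 <| (countable_iUnion hlevel).mono
    fun α hα ↦ mem_iUnion.2 ⟨f α, show α < omega1 ∧ f α = f α from ⟨hα, rfl⟩⟩

/-- Theorem (nontriviality of ρ₁): for a C-sequence on ω₁ satisfying (⋆), there is no
`ρ̃₁ : ω₁ → ℤ` with `ρ̃₁ ↾ β =* ρ₁(·,β)` for all `β < ω₁`. -/
theorem statement1 (C : Ordinal → Set Ordinal) (hC : IsCSequence C) (hstar : StarProperty C)
    (Tr : Ordinal → Ordinal → Finset Ordinal) (hTr : IsUpperTrace C Tr)
    (rho1 : Ordinal → Ordinal → ℕ) (hrho1 : IsRho1 C Tr rho1) :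
    ¬∃ f : Ordinal → ℤ, ∀ β, β < omega1 →
      {α : Ordinal | α < β ∧ f α ≠ (rho1 α β : ℤ)}.Finite :=
  statement1_general C hC Tr hTr rho1 hrho1
end
end

section
/- Fix a C-sequence ⟨C_α | α < ω₁⟩ on ω₁ satisfying (⋆). Then ρ₂ is coherent modulo bounded: for all β < γ < ω₁, the function α ↦ ρ₂(α,γ) − ρ₂(α,β) defined on β is bounded, i.e., there is k ∈ ℕ with |ρ₂(α,γ) − ρ₂(α,β)| ≤ k for all α < β. -/
/-!
Induction on `γ`. For `α < β < γ` the walk from `γ` to `α` first steps to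
`ξ = min (C γ \ α)`, and `ρ₂(α, γ) = ρ₂(α, ξ) + 1`. If `ξ ≥ β`, then `ξ = min (C γ \ β)` does not
depend on `α`, and the induction hypothesis for `β < ξ` applies. Otherwise `ξ ∈ C γ ∩ β`, which
is finite because `C γ` has order type at most `ω`; for each such `ξ` the induction hypothesis
for `ξ < β` bounds the gap at every `α < ξ`, which leaves only the finitely many `α ∈ C γ ∩ β`.
-/

noncomputable section
open Ordinal Set

def nextStep (C : Ordinal.{0} → Set Ordinal.{0}) (γ α : Ordinal.{0}) : Ordinal.{0} :=
  sInf (C γ \ Set.Iio α)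

theorem sInf_diff_Iio_eq_of_le {X : Type*} [ConditionallyCompleteLinearOrderBot X]
    [WellFoundedLT X] {S : Set X} {α β : X} (hne : (S \ Iio α).Nonempty)
    (hαβ : α ≤ β) (hβ : β ≤ sInf (S \ Iio α)) : sInf (S \ Iio α) = sInf (S \ Iio β) := by
  have hmem : sInf (S \ Iio α) ∈ S \ Iio β := ⟨(csInf_mem hne).1, not_lt.2 hβ⟩
  have hmem' : sInf (S \ Iio β) ∈ S \ Iio α :=
    sdiff_subset_sdiff_right (Iio_subset_Iio hαβ) (csInf_mem ⟨_, hmem⟩)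
  exact le_antisymm (csInf_le' hmem') (csInf_le' hmem)

theorem IsOtp.finite_inter_Iio {s : Set Ordinal} {o η : Ordinal} (h : IsOtp s o) (ho : o ≤ ω)
    (hη : η ∈ s) : (s ∩ Iio η).Finite := by
  obtain ⟨e⟩ := h
  have hfin : (Iio (e ⟨η, hη⟩ : Ordinal)).Finite := by
    rw [← Cardinal.lt_aleph0_iff_set_finite, Cardinal.mk_Iio_ordinal, Cardinal.lift_lt_aleph0,
      card_lt_aleph0]
    exact (e ⟨η, hη⟩).2.trans_le ho
  refine (((hfin.preimage Subtype.val_injective.injOn).preimage e.injective.injOn).image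
    Subtype.val).subset fun x hx => ⟨⟨x, hx.1⟩, ?_, rfl⟩
  exact e.strictMono (Subtype.mk_lt_mk.2 hx.2)

theorem ord_cof_le_omega0 {γ : Ordinal} (hγ : γ < omega1) : (cof γ).ord ≤ ω := by
  rw [← Cardinal.ord_aleph0, Cardinal.ord_le_ord]
  exact (cof_le_card γ).trans (Cardinal.lt_aleph_one_iff.1 (Cardinal.lt_ord.1 hγ))

section Walk

variable {C : Ordinal.{0} → Set Ordinal.{0}} {Tr : Ordinal.{0} → Ordinal.{0} → Finset Ordinal.{0}}
  {α β γ : Ordinal.{0}}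

theorem IsCSequence.nextStep_mem (hC : IsCSequence C) (hγ : γ < omega1) (hαγ : α < γ) :
    nextStep C γ α ∈ C γ \ Iio α :=
  let ⟨η, hη, hαη⟩ := (hC γ hγ).2 α hαγ
  csInf_mem ⟨η, hη, not_lt.2 hαη⟩

theorem IsCSequence.le_nextStep (hC : IsCSequence C) (hγ : γ < omega1) (hαγ : α < γ) :
    α ≤ nextStep C γ α :=
  not_lt.1 (hC.nextStep_mem hγ hαγ).2

theorem IsCSequence.nextStep_lt (hC : IsCSequence C) (hγ : γ < omega1) (hαγ : α < γ) :
    nextStep C γ α < γ :=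
  (hC γ hγ).1 _ (hC.nextStep_mem hγ hαγ).1

theorem IsCSequence.nextStep_eq_of_le (hC : IsCSequence C) (hγ : γ < omega1) (hαβ : α ≤ β)
    (hβγ : β < γ) (hβ : β ≤ nextStep C γ α) : nextStep C γ α = nextStep C γ β :=
  sInf_diff_Iio_eq_of_le ⟨_, hC.nextStep_mem hγ (hαβ.trans_lt hβγ)⟩ hαβ hβ

theorem StarProperty.finite_inter_Iio (hC : IsCSequence C) (hstar : StarProperty C)
    (hγ : γ < omega1) (hβγ : β < γ) : (C γ ∩ Iio β).Finite := by
  obtain ⟨η, hη, hβη⟩ := (hC γ hγ).2 β hβγ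
  exact ((hstar γ hγ).finite_inter_Iio (ord_cof_le_omega0 hγ) hη).subset
    (inter_subset_inter_right _ (Iio_subset_Iio hβη))

theorem IsUpperTrace.eq_insert_nextStep (hTr : IsUpperTrace C Tr) (hγ : γ < omega1)
    (hαγ : α < γ) : Tr α γ = insert γ (Tr α (nextStep C γ α)) :=
  hTr.2 α γ hαγ hγ

theorem IsUpperTrace.le_of_mem (hC : IsCSequence C) (hTr : IsUpperTrace C Tr) (hγ : γ < omega1)
    (hαγ : α ≤ γ) {x : Ordinal} (hx : x ∈ Tr α γ) : x ≤ γ := by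
  induction γ using WellFoundedLT.induction with
  | _ γ IH =>
  rcases hαγ.eq_or_lt with rfl | hαγ
  · rw [hTr.1, Finset.mem_singleton] at hx
    exact hx.le
  rw [hTr.eq_insert_nextStep hγ hαγ, Finset.mem_insert] at hx
  rcases hx with rfl | hx
  · exact le_rfl
  have hlt := hC.nextStep_lt hγ hαγ
  exact (IH _ hlt (hlt.trans hγ) (hC.le_nextStep hγ hαγ) hx).trans hlt.le

theorem IsUpperTrace.rho2_eq_add_one (hC : IsCSequence C) (hTr : IsUpperTrace C Tr)
    (hγ : γ < omega1) (hαγ : α < γ) : rho2 Tr α γ = rho2 Tr α (nextStep C γ α) + 1 := by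
  have hlt := hC.nextStep_lt hγ hαγ
  have hγ_notMem : γ ∉ Tr α (nextStep C γ α) := fun hmem =>
    hlt.not_ge (hTr.le_of_mem hC (hlt.trans hγ) (hC.le_nextStep hγ hαγ) hmem)
  rw [rho2, rho2, hTr.eq_insert_nextStep hγ hαγ, Finset.card_insert_of_notMem hγ_notMem,
    Nat.cast_succ]

def Rho2Coherent (Tr : Ordinal.{0} → Ordinal.{0} → Finset Ordinal.{0}) (β γ : Ordinal.{0}) :
    Prop :=
  BddAbove ((fun α => |rho2 Tr α γ - rho2 Tr α β|) '' Iio β)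

theorem rho2Coherent_self : Rho2Coherent Tr β β :=
  ⟨0, by rintro _ ⟨α, -, rfl⟩; simp⟩

theorem IsUpperTrace.bddAbove_of_nextStep_eq (hC : IsCSequence C) (hTr : IsUpperTrace C Tr)
    (hγ : γ < omega1) {A : Set Ordinal} {ξ δ : Ordinal} (hA : ∀ α ∈ A, α < γ ∧ nextStep C γ α = ξ)
    (h : BddAbove ((fun α => |rho2 Tr α ξ - rho2 Tr α δ|) '' A)) :
    BddAbove ((fun α => |rho2 Tr α γ - rho2 Tr α δ|) '' A) := by
  obtain ⟨b, hb⟩ := h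
  refine ⟨b + 1, ?_⟩
  rintro _ ⟨α, hα, rfl⟩
  obtain ⟨hαγ, rfl⟩ := hA α hα
  calc |rho2 Tr α γ - rho2 Tr α δ|
      = |(rho2 Tr α (nextStep C γ α) - rho2 Tr α δ) + 1| := by
        rw [hTr.rho2_eq_add_one hC hγ hαγ, add_sub_right_comm]
    _ ≤ |rho2 Tr α (nextStep C γ α) - rho2 Tr α δ| + |1| := abs_add_le _ _
    _ ≤ b + 1 := by rw [abs_one]; exact add_le_add_left (hb ⟨α, hα, rfl⟩) 1

theorem IsCSequence.Iio_subset_union (hC : IsCSequence C) (hγ : γ < omega1) (hβγ : β < γ) :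
    Iio β ⊆ (Iio β ∩ {α | nextStep C γ α = nextStep C γ β}) ∪ (C γ ∩ Iio β) ∪
      ⋃ ξ ∈ C γ ∩ Iio β, Iio ξ ∩ {α | nextStep C γ α = ξ} := by
  intro α (hαβ : α < β)
  have hαγ := hαβ.trans hβγ
  obtain ⟨hmem, -⟩ := hC.nextStep_mem hγ hαγ
  rcases lt_or_ge (nextStep C γ α) β with hlt | hge
  · rcases (hC.le_nextStep hγ hαγ).eq_or_lt with heq | hα
    · exact Or.inl (Or.inr ⟨heq ▸ hmem, heq ▸ hlt⟩)
    · exact Or.inr (mem_biUnion ⟨hmem, hlt⟩ ⟨hα, rfl⟩)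
  · exact Or.inl (Or.inl ⟨hαβ, hC.nextStep_eq_of_le hγ hαβ.le hβγ hge⟩)

theorem rho2Coherent_of_lt (hC : IsCSequence C) (hstar : StarProperty C)
    (hTr : IsUpperTrace C Tr) (hγ : γ < omega1) (hβγ : β < γ) : Rho2Coherent Tr β γ := by
  induction γ using WellFoundedLT.induction generalizing β with
  | _ γ IH =>
  have hF : (C γ ∩ Iio β).Finite := hstar.finite_inter_Iio hC hγ hβγ
  refine BddAbove.mono (image_mono (hC.Iio_subset_union hγ hβγ)) ?_
  rw [image_union, image_union, bddAbove_union, bddAbove_union, image_iUnion₂,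
    hF.bddAbove_biUnion]
  refine ⟨⟨?_, (hF.image _).bddAbove⟩, fun ξ hξ => ?_⟩
  · refine hTr.bddAbove_of_nextStep_eq hC hγ (fun α hα => ⟨hα.1.trans hβγ, hα.2⟩) ?_
    refine BddAbove.mono (image_mono inter_subset_left) ?_
    have hlt := hC.nextStep_lt hγ hβγ
    rcases (hC.le_nextStep hγ hβγ).eq_or_lt with heq | hβ
    · exact heq ▸ rho2Coherent_self
    · exact IH _ hlt (hlt.trans hγ) hβ
  · refine hTr.bddAbove_of_nextStep_eq hC hγ
      (fun α hα => ⟨hα.1.trans (hξ.2.trans hβγ), hα.2⟩) ?_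
    refine BddAbove.mono (image_mono inter_subset_left) ?_
    simpa only [Rho2Coherent, abs_sub_comm] using IH β hβγ (hβγ.trans hγ) hξ.2

end Walk

/-- Theorem (coherence of ρ₂ modulo bounded): for a C-sequence on ω₁ satisfying (⋆),
for all `β < γ < ω₁` the function `α ↦ ρ₂(α,γ) - ρ₂(α,β)` is bounded on `β`. -/
theorem statement2 (C : Ordinal → Set Ordinal) (hC : IsCSequence C) (hstar : StarProperty C)
    (Tr : Ordinal → Ordinal → Finset Ordinal) (hTr : IsUpperTrace C Tr) :
    ∀ β γ, β < γ → γ < omega1 →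
      ∃ k : ℕ, ∀ α, α < β → |rho2 Tr α γ - rho2 Tr α β| ≤ (k : ℤ) := by
  intro β γ hβγ hγ
  obtain ⟨b, hb⟩ := rho2Coherent_of_lt hC hstar hTr hγ hβγ
  exact ⟨b.toNat, fun α hα => (hb ⟨α, hα, rfl⟩).trans (Int.self_le_toNat b)⟩
end
end
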